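/- arXiv:2503.01500 — 2 statements merged into one kernel-verified Lean document; each statement's English description precedes it below -/
import Mathlib

section
/- For all integers p and r with 2 ≤ p ≤ r: every finite connected simple graph G with ind-match(G) = p and min-match(G) = match(G) = r has at least 2r edges. -/
variable {V : Type*}

/-- A matching of `G`: a set of edges of `G` that are pairwise disjoint. -/
def IsMatchingSet (G : SimpleGraph V) (M : Set (Sym2 V)) : Prop :=
  (∀ e ∈ M, e ∈ G.edgeSet) ∧
    ∀ e ∈ M, ∀ f ∈ M, e ≠ f → ∀ v : V, v ∈ e → v ∉ f

/-- A maximal matching of `G`: a matching `M` such that `M ∪ {e}` is not a matching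
for every edge `e` of `G` not in `M`. -/
def IsMaximalMatchingSet (G : SimpleGraph V) (M : Set (Sym2 V)) : Prop :=
  IsMatchingSet G M ∧
    ∀ e ∈ G.edgeSet, e ∉ M → ¬ IsMatchingSet G (insert e M)

/-- An induced matching of `G`: a matching `M` such that no edge of `G` meets
two distinct edges of `M`. -/
def IsInducedMatchingSet (G : SimpleGraph V) (M : Set (Sym2 V)) : Prop :=
  IsMatchingSet G M ∧
    ∀ e ∈ M, ∀ f ∈ M, e ≠ f → ∀ g ∈ G.edgeSet,
      ¬ ((∃ v : V, v ∈ g ∧ v ∈ e) ∧ (∃ v : V, v ∈ g ∧ v ∈ f))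

/-- The matching number of `G`: the maximum size of a matching. -/
noncomputable def matchNum (G : SimpleGraph V) : ℕ :=
  sSup {n | ∃ M : Set (Sym2 V), IsMatchingSet G M ∧ M.ncard = n}

/-- The minimum matching number of `G`: the minimum size of a maximal matching. -/
noncomputable def minMatchNum (G : SimpleGraph V) : ℕ :=
  sInf {n | ∃ M : Set (Sym2 V), IsMaximalMatchingSet G M ∧ M.ncard = n}

/-- The induced matching number of `G`: the maximum size of an induced matching. -/
noncomputable def indMatchNum (G : SimpleGraph V) : ℕ :=
  sSup {n | ∃ M : Set (Sym2 V), IsInducedMatchingSet G M ∧ M.ncard = n}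


/-! Let `M` be a maximum matching, of size `r`; it covers `2r` vertices. A connected graph on `n`
vertices has at least `n - 1` edges, so fewer than `2r` edges force `G` to be a tree on exactly `2r`
vertices in which `M` is perfect. As `r ≥ 2`, some edge `ab` lies outside `M`; replacing the
matching edges `au` and `by` by `ab` yields a matching of size `r - 1` missing only `u` and `y`,
which are not adjacent since `u a b y u` would be a cycle of the tree. This matching is maximal,
contradicting `minMatchNum G = r`. -/

open SimpleGraph

lemma SimpleGraph.IsAcyclic.not_adj_of_adj_of_adj_of_adj {G : SimpleGraph V} (hG : G.IsAcyclic)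
    {u a b y : V} (hua : G.Adj u a) (hab : G.Adj a b) (hby : G.Adj b y)
    (hub : u ≠ b) (hay : a ≠ y) (huy : u ≠ y) : ¬G.Adj u y := by
  intro hadj
  let p : G.Walk u y := .cons hua (.cons hab (.cons hby .nil))
  have hp : p.IsPath := by
    simp [p, Walk.isPath_def, hua.ne, hab.ne, hby.ne, hub, hay, huy]
  exact hay (hG.eq_snd_of_adj_start hp hadj (by simp [p])).symm

namespace IsMatchingSet

variable {G : SimpleGraph V} {M N : Set (Sym2 V)}

lemma eq_of_mem_of_mem (hM : IsMatchingSet G M) {e f : Sym2 V} (he : e ∈ M) (hf : f ∈ M)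
    {v : V} (hve : v ∈ e) (hvf : v ∈ f) : e = f := by
  by_contra hef
  exact hM.2 e he f hf hef v hve hvf

lemma mono (hM : IsMatchingSet G M) (hNM : N ⊆ M) : IsMatchingSet G N :=
  ⟨fun e he ↦ hM.1 e (hNM he), fun e he f hf ↦ hM.2 e (hNM he) f (hNM hf)⟩

lemma insert_iff {g : Sym2 V} (hg : g ∉ N) :
    IsMatchingSet G (insert g N) ↔
      IsMatchingSet G N ∧ g ∈ G.edgeSet ∧ ∀ f ∈ N, ∀ v ∈ g, v ∉ f := by
  constructor
  · intro h
    refine ⟨h.mono (Set.subset_insert g N), h.1 g (Set.mem_insert g N), fun f hf v hvg ↦ ?_⟩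
    exact h.2 g (Set.mem_insert g N) f (Set.mem_insert_of_mem g hf) (by rintro rfl; exact hg hf)
      v hvg
  · rintro ⟨hN, hgE, hdisj⟩
    refine ⟨fun e he ↦ ?_, fun e he f hf hef v hve hvf ↦ ?_⟩
    · rcases he with rfl | he
      exacts [hgE, hN.1 e he]
    · rcases he with rfl | he <;> rcases hf with rfl | hf
      · exact hef rfl
      · exact hdisj f hf v hve hvf
      · exact hdisj e he v hvf hve
      · exact hN.2 e he f hf hef v hve hvf

lemma isMaximalMatchingSet (hM : IsMatchingSet G M)
    (hmeet : ∀ v w, G.Adj v w → (∃ f ∈ M, v ∈ f) ∨ ∃ f ∈ M, w ∈ f) :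
    IsMaximalMatchingSet G M := by
  refine ⟨hM, fun e he heM hins ↦ ?_⟩
  induction e using Sym2.ind with | _ v w => ?_
  have hdisj := ((insert_iff heM).1 hins).2.2
  rcases hmeet v w he with ⟨f, hf, hvf⟩ | ⟨f, hf, hwf⟩
  · exact hdisj f hf v (Sym2.mem_mk_left v w) hvf
  · exact hdisj f hf w (Sym2.mem_mk_right v w) hwf

lemma ncard_matchedVerts [Finite V] (hM : IsMatchingSet G M) :
    {v | ∃ e ∈ M, v ∈ e}.ncard = 2 * M.ncard := by
  classical
  have := Fintype.ofFinite V
  have hcover : {v | ∃ e ∈ M, v ∈ e} = ↑(M.toFinset.biUnion Sym2.toFinset) := by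
    ext v
    simp
  have hdisj : (M.toFinset : Set (Sym2 V)).PairwiseDisjoint Sym2.toFinset := by
    intro e he f hf hef
    simp only [Set.coe_toFinset] at he hf
    exact Finset.disjoint_left.2 fun v hve hvf ↦
      hM.2 e he f hf hef v (Sym2.mem_toFinset.1 hve) (Sym2.mem_toFinset.1 hvf)
  rw [hcover, Set.ncard_coe_finset, Finset.card_biUnion hdisj, Set.ncard_eq_toFinset_card',
    Finset.sum_congr rfl fun e he ↦ Sym2.card_toFinset_of_not_isDiag e
      (G.not_isDiag_of_mem_edgeSet (hM.1 e (Set.mem_toFinset.1 he))),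
    Finset.sum_const, smul_eq_mul, mul_comm]

lemma two_mul_ncard_le [Finite V] (hM : IsMatchingSet G M) : 2 * M.ncard ≤ Nat.card V := by
  rw [← hM.ncard_matchedVerts, ← Set.ncard_univ]
  exact Set.ncard_le_ncard (Set.subset_univ _)

lemma exists_mem_of_two_mul_ncard_eq [Finite V] (hM : IsMatchingSet G M)
    (hperf : 2 * M.ncard = Nat.card V) (v : V) : ∃ e ∈ M, v ∈ e := by
  have hcover : {v | ∃ e ∈ M, v ∈ e} = Set.univ :=
    Set.eq_of_subset_of_ncard_le (Set.subset_univ _)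
      (by rw [Set.ncard_univ, hM.ncard_matchedVerts, hperf])
  exact Set.eq_univ_iff_forall.1 hcover v

end IsMatchingSet

lemma exists_isMatchingSet_ncard_eq_matchNum [Finite V] (G : SimpleGraph V) :
    ∃ M, IsMatchingSet G M ∧ M.ncard = matchNum G := by
  have hne : {n | ∃ M : Set (Sym2 V), IsMatchingSet G M ∧ M.ncard = n}.Nonempty :=
    ⟨0, ∅, ⟨by simp, by simp⟩, Set.ncard_empty _⟩
  have hbdd : BddAbove {n | ∃ M : Set (Sym2 V), IsMatchingSet G M ∧ M.ncard = n} := by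
    refine ⟨(Set.univ : Set (Sym2 V)).ncard, ?_⟩
    rintro n ⟨M, -, rfl⟩
    exact Set.ncard_le_ncard (Set.subset_univ M)
  exact Nat.sSup_mem hne hbdd

section

variable {G : SimpleGraph V} {M : Set (Sym2 V)}

lemma minMatchNum_le_ncard (hM : IsMaximalMatchingSet G M) : minMatchNum G ≤ M.ncard :=
  Nat.sInf_le ⟨M, hM, rfl⟩

lemma isMaximalMatchingSet_exchange (hM : IsMatchingSet G M) (hcov : ∀ v, ∃ e ∈ M, v ∈ e)
    {a b u y : V} (hab : G.Adj a b) (habM : s(a, b) ∉ M) (hau : s(a, u) ∈ M)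
    (hby : s(b, y) ∈ M) (huy : ¬G.Adj u y) :
    IsMaximalMatchingSet G (insert s(a, b) (M \ {s(a, u), s(b, y)})) := by
  have hrest : IsMatchingSet G (M \ {s(a, u), s(b, y)}) := hM.mono Set.sdiff_subset
  have hnotMem : s(a, b) ∉ M \ {s(a, u), s(b, y)} := fun h ↦ habM h.1
  have hexch : IsMatchingSet G (insert s(a, b) (M \ {s(a, u), s(b, y)})) := by
    refine (IsMatchingSet.insert_iff hnotMem).2 ⟨hrest, hab, fun f hf v hv hvf ↦ hf.2 ?_⟩
    rcases Sym2.mem_iff.1 hv with rfl | rfl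
    · exact .inl (hM.eq_of_mem_of_mem hf.1 hau hvf (Sym2.mem_mk_left _ _))
    · exact .inr (hM.eq_of_mem_of_mem hf.1 hby hvf (Sym2.mem_mk_left _ _))
  have hcovered : ∀ v, v ≠ u → v ≠ y → ∃ f ∈ insert s(a, b) (M \ {s(a, u), s(b, y)}), v ∈ f := by
    intro v hvu hvy
    obtain ⟨f, hf, hvf⟩ := hcov v
    by_cases hfe : f ∈ ({s(a, u), s(b, y)} : Set (Sym2 V))
    · refine ⟨s(a, b), Set.mem_insert _ _, ?_⟩
      rcases hfe with rfl | rfl <;> simp_all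
    · exact ⟨f, Set.mem_insert_of_mem _ ⟨hf, hfe⟩, hvf⟩
  refine hexch.isMaximalMatchingSet fun v w hvw ↦ ?_
  by_contra hfree
  rw [not_or] at hfree
  have hv : v = u ∨ v = y := by
    by_contra! h
    exact hfree.1 (hcovered v h.1 h.2)
  have hw : w = u ∨ w = y := by
    by_contra! h
    exact hfree.2 (hcovered w h.1 h.2)
  rcases hv with rfl | rfl <;> rcases hw with rfl | rfl
  exacts [hvw.ne rfl, huy hvw, huy hvw.symm, hvw.ne rfl]

lemma SimpleGraph.IsAcyclic.exists_isMaximalMatchingSet_ncard_add_one_eq [Finite V]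
    (hG : G.IsAcyclic) (hM : IsMatchingSet G M) (hcov : ∀ v, ∃ e ∈ M, v ∈ e) {g : Sym2 V}
    (hgE : g ∈ G.edgeSet) (hgM : g ∉ M) :
    ∃ N, IsMaximalMatchingSet G N ∧ N.ncard + 1 = M.ncard := by
  induction g using Sym2.ind with | _ a b => ?_
  have hab : G.Adj a b := hgE
  obtain ⟨e, heM, hae⟩ := hcov a
  obtain ⟨e', he'M, hbe'⟩ := hcov b
  obtain ⟨u, rfl⟩ := Sym2.mem_iff_exists.1 hae
  obtain ⟨y, rfl⟩ := Sym2.mem_iff_exists.1 hbe'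
  have hne : s(a, u) ≠ s(b, y) := fun h ↦
    hgM ((Sym2.mem_and_mem_iff hab.ne).1 ⟨hae, h ▸ hbe'⟩ ▸ heM)
  have hdisj {v : V} (hvu : v ∈ s(a, u)) (hvy : v ∈ s(b, y)) : False :=
    hne (hM.eq_of_mem_of_mem heM he'M hvu hvy)
  have hua : G.Adj u a := (hM.1 _ heM).symm
  have hby : G.Adj b y := hM.1 _ he'M
  have huy : ¬G.Adj u y := hG.not_adj_of_adj_of_adj_of_adj hua hab hby
    (by rintro rfl; exact hdisj (Sym2.mem_mk_right a _) (Sym2.mem_mk_left _ y))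
    (by rintro rfl; exact hdisj (Sym2.mem_mk_left a u) (Sym2.mem_mk_right b a))
    (by rintro rfl; exact hdisj (Sym2.mem_mk_right a u) (Sym2.mem_mk_right b u))
  refine ⟨_, isMaximalMatchingSet_exchange hM hcov hab hgM heM he'M huy, ?_⟩
  have hpair : {s(a, u), s(b, y)} ⊆ M := Set.insert_subset heM (Set.singleton_subset_iff.2 he'M)
  rw [Set.ncard_insert_of_notMem (fun h ↦ hgM h.1), Set.ncard_sdiff hpair, Set.ncard_pair hne]
  have := Set.ncard_le_ncard hpair
  rw [Set.ncard_pair hne] at this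
  omega

end

theorem stmt_5_general (p r : ℕ) (hp : 2 ≤ p) (hpr : p ≤ r)
    (V : Type) [Fintype V] (G : SimpleGraph V) (hconn : G.Connected)
    (hmin : minMatchNum G = r) (hmatch : matchNum G = r) :
    2 * r ≤ G.edgeSet.ncard := by
  obtain ⟨M, hM, hMr⟩ := exists_isMatchingSet_ncard_eq_matchNum G
  rw [hmatch] at hMr
  by_contra! hfew
  have hV := hM.two_mul_ncard_le
  have hE := hconn.card_vert_le_card_edgeSet_add_one
  rw [Nat.card_coe_set_eq] at hE
  have htree : G.IsTree :=
    isTree_iff_connected_and_card.2 ⟨hconn, by rw [Nat.card_coe_set_eq]; omega⟩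
  have hcov := hM.exists_mem_of_two_mul_ncard_eq (by omega)
  obtain ⟨g, hgE, hgM⟩ := Set.exists_mem_notMem_of_ncard_lt_ncard (s := M) (t := G.edgeSet)
    (by omega)
  obtain ⟨N, hN, hNM⟩ :=
    htree.isAcyclic.exists_isMaximalMatchingSet_ncard_add_one_eq hM hcov hgE hgM
  have := minMatchNum_le_ncard hN
  omega

theorem stmt_5 (p r : ℕ) (hp : 2 ≤ p) (hpr : p ≤ r)
    (V : Type) [Fintype V] (G : SimpleGraph V) (hconn : G.Connected)
    (hind : indMatchNum G = p) (hmin : minMatchNum G = r) (hmatch : matchNum G = r) :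
    2 * r ≤ G.edgeSet.ncard :=
  stmt_5_general p r hp hpr V G hconn hmin hmatch
end

section
/- For all integers q and r with q + 2 ≤ r ≤ 2q − 2 there exists a finite connected simple graph G with ind-match(G) = 1, min-match(G) = q, match(G) = r, and at most min{f₁(q,r), f₂(q,r)} edges, where f₁(q,r) = r(q − 1) + (r − q + 2 choose 2) and f₂(q,r) = 2(r − q) + (2q choose 2). -/
variable {V : Type*}

/-!
The witness is a bipartite chain graph on `2 * m` vertices (`m = r`): left vertex `i` is
joined to the first `d i` right vertices. Nested neighbourhoods make any two edges joined by a
third, so induced matchings have size one. If `d i ≥ m - i`, the antidiagonal is a perfect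
matching, while the left side is a vertex cover, so `match = m`. If `d i ≥ q` for `i < q` and
`d i ≤ q` otherwise, the first `q` left and right vertices span `K_{q,q}` and every edge meets
them: a maximal matching must then cover one of these two independent sides, and the `q`
diagonal edges of `K_{q,q}` already form one. Taking `d i = q + (s - i)` for `i < q` and
`d (q + i) = s - i`, with `s = r - q`, gives `q² + s(s+1)` edges.
-/

open Finset

section Matching

variable {V : Type*} {G : SimpleGraph V} {M : Set (Sym2 V)}

lemma IsMatchingSet.ncard_le_of_cover {C : Set V} (hM : IsMatchingSet G M) (hC : C.Finite)
    (hcover : ∀ e ∈ M, ∃ v ∈ C, v ∈ e) : M.ncard ≤ C.ncard := by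
  choose f hfC hfe using hcover
  have : Finite C := hC
  rw [← Nat.card_coe_set_eq, ← Nat.card_coe_set_eq]
  refine Nat.card_le_card_of_injective (fun e => ⟨f e e.2, hfC e e.2⟩) fun e e' h => ?_
  by_contra hne
  have hfe' : f e e.2 ∈ (e' : Sym2 V) := by
    rw [show f e e.2 = f e' e'.2 from congrArg Subtype.val h]; exact hfe e' e'.2
  exact hM.2 e e.2 e' e'.2 (Subtype.coe_ne_coe.mpr hne) _ (hfe e e.2) hfe'

lemma IsMatchingSet.ncard_le_of_isIndepSet {T : Set V} (hM : IsMatchingSet G M)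
    (hMfin : M.Finite) (hT : G.IsIndepSet T) (hcover : ∀ v ∈ T, ∃ e ∈ M, v ∈ e) :
    T.ncard ≤ M.ncard := by
  choose f hfM hvf using hcover
  have : Finite M := hMfin
  rw [← Nat.card_coe_set_eq, ← Nat.card_coe_set_eq]
  refine Nat.card_le_card_of_injective (fun v => ⟨f v v.2, hfM v v.2⟩) fun v w h => ?_
  by_contra hne
  have hw : (w : V) ∈ f v v.2 := by
    rw [show f v v.2 = f w w.2 from congrArg Subtype.val h]; exact hvf w w.2
  have hadj : G.Adj v w := by
    rw [← SimpleGraph.mem_edgeSet, ← (Sym2.mem_and_mem_iff (Subtype.coe_ne_coe.mpr hne)).mp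
      ⟨hvf v v.2, hw⟩]
    exact hM.1 _ (hfM v v.2)
  exact hT v.2 w.2 (Subtype.coe_ne_coe.mpr hne) hadj

lemma isMaximalMatchingSet_iff : IsMaximalMatchingSet G M ↔
    IsMatchingSet G M ∧ ∀ e ∈ G.edgeSet, ∃ f ∈ M, ∃ v ∈ e, v ∈ f := by
  refine and_congr_right fun hM => ⟨fun hmax e he => ?_, fun hmeet e he heM hins => ?_⟩
  · by_cases heM : e ∈ M
    · obtain ⟨v, w⟩ := e
      exact ⟨_, heM, v, Sym2.mem_mk_left _ _, Sym2.mem_mk_left _ _⟩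
    by_contra! hfree
    refine hmax e he heM ⟨?_, ?_⟩
    · rintro f (rfl | hf)
      exacts [he, hM.1 f hf]
    · rintro f (rfl | hf) g (rfl | hg) hfg v hvf hvg
      · exact hfg rfl
      · exact hfree g hg v hvf hvg
      · exact hfree f hf v hvg hvf
      · exact hM.2 f hf g hg hfg v hvf hvg
  · obtain ⟨f, hf, v, hve, hvf⟩ := hmeet e he
    exact hins.2 e (Set.mem_insert _ _) f (Set.mem_insert_of_mem _ hf)
      (fun h => heM (h ▸ hf)) v hve hvf

lemma IsMaximalMatchingSet.min_ncard_le_ncard [Finite V] {A B : Set V}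
    (hM : IsMaximalMatchingSet G M) (hA : G.IsIndepSet A) (hB : G.IsIndepSet B)
    (hAB : ∀ a ∈ A, ∀ b ∈ B, G.Adj a b) : min A.ncard B.ncard ≤ M.ncard := by
  obtain ⟨hmatch, hmeet⟩ := isMaximalMatchingSet_iff.mp hM
  by_cases hAcov : ∀ a ∈ A, ∃ e ∈ M, a ∈ e
  · exact min_le_of_left_le (hmatch.ncard_le_of_isIndepSet M.toFinite hA hAcov)
  push Not at hAcov
  obtain ⟨a, ha, hfree⟩ := hAcov
  refine min_le_of_right_le (hmatch.ncard_le_of_isIndepSet M.toFinite hB fun b hb => ?_)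
  obtain ⟨f, hf, v, hv, hvf⟩ := hmeet s(a, b) (hAB a ha b hb)
  rcases Sym2.mem_iff.mp hv with rfl | rfl
  exacts [absurd hvf (hfree f hf), ⟨f, hf, hvf⟩]

lemma IsInducedMatchingSet.ncard_le_one [Finite V]
    (hlink : ∀ e ∈ G.edgeSet, ∀ f ∈ G.edgeSet, ∃ g ∈ G.edgeSet,
      (∃ v, v ∈ g ∧ v ∈ e) ∧ (∃ v, v ∈ g ∧ v ∈ f))
    (hM : IsInducedMatchingSet G M) : M.ncard ≤ 1 := by
  refine (Set.ncard_le_one M.toFinite).mpr fun e he f hf => ?_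
  by_contra hne
  obtain ⟨g, hg, hge, hgf⟩ := hlink e (hM.1.1 e he) f (hM.1.1 f hf)
  exact hM.2 e he f hf hne g hg ⟨hge, hgf⟩

lemma isInducedMatchingSet_singleton {e : Sym2 V} (he : e ∈ G.edgeSet) :
    IsInducedMatchingSet G {e} := by
  refine ⟨⟨fun f hf => hf ▸ he, ?_⟩, ?_⟩ <;>
    rintro f rfl g rfl hfg <;> exact absurd rfl hfg

end Matching

lemma ncard_fin_setOf_val_mem_Ico {n a b : ℕ} (hb : b ≤ n) :
    {v : Fin n | a ≤ v.val ∧ v.val < b}.ncard = b - a := by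
  have himage : Fin.val '' {v : Fin n | a ≤ v.val ∧ v.val < b} = Set.Ico a b := by
    ext x
    refine ⟨fun ⟨v, hv, hx⟩ => hx ▸ hv, fun hx => ⟨⟨x, by grind⟩, hx, rfl⟩⟩
  rw [← Set.ncard_image_of_injective _ Fin.val_injective, himage, ← Finset.coe_Ico,
    Set.ncard_coe_finset, Nat.card_Ico]

section ChainGraph

def chainRel (m : ℕ) (d : ℕ → ℕ) (a b : ℕ) : Prop := a < m ∧ m ≤ b ∧ b - m < d a

def chainGraph (m : ℕ) (d : ℕ → ℕ) : SimpleGraph (Fin (2 * m)) where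
  Adj u v := chainRel m d u v ∨ chainRel m d v u
  symm := ⟨fun _ _ => Or.symm⟩
  loopless := ⟨fun _ h => by simp only [chainRel] at h; omega⟩

variable {m : ℕ} {d : ℕ → ℕ}

lemma chainGraph_adj {u v : Fin (2 * m)} :
    (chainGraph m d).Adj u v ↔ chainRel m d u v ∨ chainRel m d v u := Iff.rfl

lemma mem_edgeSet_of_chainRel {a b : Fin (2 * m)} (h : chainRel m d a b) :
    s(a, b) ∈ (chainGraph m d).edgeSet := Or.inl h

lemma exists_chainRel_of_mem_edgeSet {e : Sym2 (Fin (2 * m))}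
    (he : e ∈ (chainGraph m d).edgeSet) :
    ∃ a b : Fin (2 * m), chainRel m d a b ∧ e = s(a, b) := by
  induction e using Sym2.ind with
  | h x y =>
    rcases he with h | h
    exacts [⟨x, y, h, rfl⟩, ⟨y, x, h, Sym2.eq_swap⟩]

lemma isIndepSet_chainGraph_of_lt (A : Set (Fin (2 * m))) (hA : ∀ v ∈ A, v.val < m) :
    (chainGraph m d).IsIndepSet A := by
  intro u hu v hv _ h
  have := hA u hu; have := hA v hv
  simp only [chainGraph_adj, chainRel] at h; omega

lemma isIndepSet_chainGraph_of_ge (A : Set (Fin (2 * m))) (hA : ∀ v ∈ A, m ≤ v.val) :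
    (chainGraph m d).IsIndepSet A := by
  intro u hu v hv _ h
  have := hA u hu; have := hA v hv
  simp only [chainGraph_adj, chainRel] at h; omega

/-- Neighbourhoods of left vertices are nested, so one of the two cross pairs is an edge. -/
lemma chainGraph_edges_linked {e f : Sym2 (Fin (2 * m))} (he : e ∈ (chainGraph m d).edgeSet)
    (hf : f ∈ (chainGraph m d).edgeSet) : ∃ g ∈ (chainGraph m d).edgeSet,
      (∃ v, v ∈ g ∧ v ∈ e) ∧ (∃ v, v ∈ g ∧ v ∈ f) := by
  obtain ⟨a, b, hab, rfl⟩ := exists_chainRel_of_mem_edgeSet he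
  obtain ⟨a', b', hab', rfl⟩ := exists_chainRel_of_mem_edgeSet hf
  simp only [chainRel] at hab hab'
  rcases le_total (d a') (d a) with h | h
  · have hadj : (chainGraph m d).Adj a b' := Or.inl ⟨hab.1, hab'.2.1, by omega⟩
    exact ⟨s(a, b'), hadj, ⟨a, by simp, by simp⟩, ⟨b', by simp, by simp⟩⟩
  · have hadj : (chainGraph m d).Adj a' b := Or.inl ⟨hab'.1, hab.2.1, by omega⟩
    exact ⟨s(a', b), hadj, ⟨b, by simp, by simp⟩, ⟨a', by simp, by simp⟩⟩

lemma chainGraph_connected (hm : 0 < m) (hd : ∀ i < m, m - i ≤ d i) :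
    (chainGraph m d).Connected := by
  have hd0 := hd 0 hm
  have hroot : (chainGraph m d).Adj ⟨0, by omega⟩ ⟨m, by omega⟩ :=
    Or.inl ⟨hm, le_rfl, by simp only [Nat.sub_self]; omega⟩
  have hreach : ∀ v, (chainGraph m d).Reachable v ⟨0, by omega⟩ := by
    intro v
    by_cases hv : v.val < m
    · have hdv := hd v hv
      have hadj : (chainGraph m d).Adj v ⟨m, by omega⟩ :=
        Or.inl ⟨hv, le_rfl, by simp only [Nat.sub_self]; omega⟩
      exact hadj.reachable.trans hroot.symm.reachable
    · exact SimpleGraph.Adj.reachable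
        (Or.inr ⟨hm, by omega, show (v : ℕ) - m < d 0 by omega⟩)
  have : Nonempty (Fin (2 * m)) := ⟨⟨0, by omega⟩⟩
  exact (SimpleGraph.connected_iff _).mpr ⟨fun u v => (hreach u).trans (hreach v).symm, this⟩

lemma exists_mem_val_lt_of_mem_edgeSet {e : Sym2 (Fin (2 * m))}
    (he : e ∈ (chainGraph m d).edgeSet) : ∃ v ∈ e, v.val < m := by
  obtain ⟨a, b, hab, rfl⟩ := exists_chainRel_of_mem_edgeSet he
  exact ⟨a, Sym2.mem_mk_left _ _, hab.1⟩

lemma ncard_edgeSet_chainGraph_le : (chainGraph m d).edgeSet.ncard ≤ ∑ i ∈ range m, d i := by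
  let f : Sym2 (Fin (2 * m)) → (_ : ℕ) × ℕ := Sym2.lift
    ⟨fun a b => ⟨min a.val b.val, max a.val b.val - m⟩,
      fun a b => by dsimp only; rw [min_comm, max_comm]⟩
  have hf : ∀ {a b : Fin (2 * m)}, chainRel m d a b → f s(a, b) = ⟨a, b - m⟩ := by
    intro a b hab
    simp only [chainRel] at hab
    simp only [f, Sym2.lift_mk, min_eq_left (by omega : a.val ≤ b.val),
      max_eq_right (by omega : a.val ≤ b.val)]
  have hsum : ∑ i ∈ range m, d i =
      (↑((range m).sigma fun i => range (d i)) : Set ((_ : ℕ) × ℕ)).ncard := by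
    rw [Set.ncard_coe_finset, Finset.card_sigma]
    simp only [Finset.card_range]
  rw [hsum]
  refine Set.ncard_le_ncard_of_injOn f ?_ ?_ (Finset.finite_toSet _)
  · intro e he
    obtain ⟨a, b, hab, rfl⟩ := exists_chainRel_of_mem_edgeSet he
    rw [hf hab]
    simp only [chainRel] at hab
    simp [hab.1, hab.2.2]
  · intro e he e' he' heq
    obtain ⟨a, b, hab, rfl⟩ := exists_chainRel_of_mem_edgeSet he
    obtain ⟨a', b', hab', rfl⟩ := exists_chainRel_of_mem_edgeSet he'
    rw [hf hab, hf hab'] at heq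
    simp only [Sigma.mk.injEq, heq_eq_eq] at heq
    simp only [chainRel] at hab hab'
    rw [Fin.ext heq.1, Fin.ext (show b.val = b'.val by omega)]

def chainMatching (m k : ℕ) (p : ℕ → ℕ) : Set (Sym2 (Fin (2 * m))) :=
  {e | ∃ u w : Fin (2 * m), u.val < k ∧ w.val = m + p u ∧ e = s(u, w)}

variable {k : ℕ} {p : ℕ → ℕ}

lemma isMatchingSet_chainMatching (hk : k ≤ m) (hp : ∀ i < k, p i < d i)
    (hpinj : ∀ i < k, ∀ j < k, p i = p j → i = j) :
    IsMatchingSet (chainGraph m d) (chainMatching m k p) := by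
  constructor
  · rintro e ⟨u, w, hu, hw, rfl⟩
    exact mem_edgeSet_of_chainRel ⟨by omega, by omega, by have := hp u hu; omega⟩
  · rintro e ⟨u, w, hu, hw, rfl⟩ e' ⟨u', w', hu', hw', rfl⟩ hne v hv hv'
    have hval : u.val = u'.val := by
      rcases Sym2.mem_iff.mp hv with rfl | rfl <;> rcases Sym2.mem_iff.mp hv' with h | h
      all_goals first
        | exact congrArg Fin.val h
        | omega
        | exact hpinj _ hu _ hu' (by rw [h] at hw; omega)
    apply hne
    rw [Fin.ext hval, Fin.ext (show w.val = w'.val by rw [hw, hw', hval])]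

lemma exists_mem_chainMatching (hp : ∀ i < k, p i < m) {v : Fin (2 * m)} (hv : v.val < k) :
    ∃ e ∈ chainMatching m k p, v ∈ e := by
  have := hp v hv
  exact ⟨_, ⟨v, ⟨m + p v, by omega⟩, hv, rfl, rfl⟩, Sym2.mem_mk_left _ _⟩

lemma matchNum_chainGraph (hd : ∀ i < m, m - i ≤ d i) : matchNum (chainGraph m d) = m := by
  set L : Set (Fin (2 * m)) := {v | 0 ≤ v.val ∧ v.val < m}
  have hL : L.ncard = m := ncard_fin_setOf_val_mem_Ico (by omega)
  have hbound : ∀ M, IsMatchingSet (chainGraph m d) M → M.ncard ≤ m := fun M hM =>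
    (hM.ncard_le_of_cover L.toFinite fun e he =>
      let ⟨v, hve, hv⟩ := exists_mem_val_lt_of_mem_edgeSet (hM.1 e he)
      ⟨v, ⟨v.val.zero_le, hv⟩, hve⟩).trans_eq hL
  have hM := isMatchingSet_chainMatching (d := d) le_rfl (p := fun i => m - 1 - i)
    (fun i hi => by have := hd i hi; omega) (fun i hi j hj h => by omega)
  have hcover : ∀ v ∈ L, ∃ e ∈ chainMatching m m (fun i => m - 1 - i), v ∈ e :=
    fun v hv => exists_mem_chainMatching (fun i hi => by omega) hv.2
  have hcard := hM.ncard_le_of_isIndepSet (Set.toFinite _)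
    (isIndepSet_chainGraph_of_lt L fun v hv => hv.2) hcover
  refine IsGreatest.csSup_eq
    ⟨⟨_, hM, le_antisymm (hbound _ hM) (hL.symm.trans_le hcard)⟩, ?_⟩
  rintro n ⟨M, hM, rfl⟩
  exact hbound M hM

lemma indMatchNum_chainGraph (hm : 0 < m) (hd : 0 < d 0) :
    indMatchNum (chainGraph m d) = 1 := by
  have he : s(⟨0, by omega⟩, ⟨m, by omega⟩) ∈ (chainGraph m d).edgeSet :=
    mem_edgeSet_of_chainRel ⟨hm, le_rfl, by simpa using hd⟩
  refine IsGreatest.csSup_eq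
    ⟨⟨_, isInducedMatchingSet_singleton he, Set.ncard_singleton _⟩, ?_⟩
  rintro n ⟨M, hM, rfl⟩
  exact hM.ncard_le_one fun e he f hf => chainGraph_edges_linked he hf

lemma minMatchNum_chainGraph {q : ℕ} (hqm : q ≤ m) (hlo : ∀ i < q, q ≤ d i)
    (hhi : ∀ i, q ≤ i → i < m → d i ≤ q) : minMatchNum (chainGraph m d) = q := by
  set A : Set (Fin (2 * m)) := {v | 0 ≤ v.val ∧ v.val < q}
  set B : Set (Fin (2 * m)) := {v | m ≤ v.val ∧ v.val < m + q}
  have hA : A.ncard = q := ncard_fin_setOf_val_mem_Ico (by omega)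
  have hB : B.ncard = q := by rw [ncard_fin_setOf_val_mem_Ico (by omega)]; omega
  have hbound : ∀ M, IsMaximalMatchingSet (chainGraph m d) M → q ≤ M.ncard := by
    intro M hM
    have hAB : ∀ a ∈ A, ∀ b ∈ B, (chainGraph m d).Adj a b := by
      rintro a ⟨-, ha⟩ b ⟨hb, hb'⟩
      exact Or.inl ⟨by omega, hb, by have := hlo a ha; omega⟩
    have := hM.min_ncard_le_ncard
      (isIndepSet_chainGraph_of_lt A fun v hv => hv.2.trans_le hqm)
      (isIndepSet_chainGraph_of_ge B fun v hv => hv.1) hAB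
    rwa [hA, hB, min_self] at this
  set M₀ := chainMatching m q id
  have hM₀ : IsMatchingSet (chainGraph m d) M₀ :=
    isMatchingSet_chainMatching hqm (fun i hi => hi.trans_le (hlo i hi)) (fun i _ j _ h => h)
  have hmax : IsMaximalMatchingSet (chainGraph m d) M₀ := by
    refine isMaximalMatchingSet_iff.mpr ⟨hM₀, fun e he => ?_⟩
    obtain ⟨a, b, hab, rfl⟩ := exists_chainRel_of_mem_edgeSet he
    simp only [chainRel] at hab
    by_cases ha : a.val < q
    · obtain ⟨f, hf, haf⟩ :=
        exists_mem_chainMatching (p := id) (fun i hi => hi.trans_le hqm) ha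
      exact ⟨f, hf, a, Sym2.mem_mk_left _ _, haf⟩
    · have := hhi a (by omega) hab.1
      refine ⟨s(⟨b - m, by omega⟩, b),
        ⟨_, b, by simp only; omega, by simp only [id]; omega, rfl⟩,
        b, Sym2.mem_mk_right _ _, Sym2.mem_mk_right _ _⟩
  have hcover : ∀ e ∈ M₀, ∃ v ∈ A, v ∈ e := fun _ ⟨u, _, hu, _, he⟩ =>
    ⟨u, ⟨u.val.zero_le, hu⟩, he ▸ Sym2.mem_mk_left _ _⟩
  have hcard : M₀.ncard ≤ q := (hM₀.ncard_le_of_cover A.toFinite hcover).trans_eq hA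
  refine IsLeast.csInf_eq ⟨⟨M₀, hmax, le_antisymm hcard (hbound M₀ hmax)⟩, ?_⟩
  rintro n ⟨M, hM, rfl⟩
  exact hbound M hM

end ChainGraph

def leftDegree (q s i : ℕ) : ℕ := if i < q then q + (s - i) else q + s - i

lemma two_mul_sum_range_sub (s : ℕ) : 2 * ∑ i ∈ range s, (s - i) = s * (s + 1) := by
  induction s with
  | zero => simp
  | succ s ih =>
    rw [Finset.sum_range_succ']
    simp only [Nat.add_sub_add_right, Nat.sub_zero]
    rw [mul_add, ih]
    ring

lemma sum_range_leftDegree {q s : ℕ} (hsq : s ≤ q) :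
    ∑ i ∈ range (q + s), leftDegree q s i = q * q + s * (s + 1) := by
  have hleft : ∑ i ∈ range q, leftDegree q s i = q * q + ∑ i ∈ range s, (s - i) := by
    obtain ⟨t, rfl⟩ := Nat.exists_eq_add_of_le hsq
    have hlt : ∀ i ∈ range (s + t), leftDegree (s + t) s i = s + t + (s - i) :=
      fun i hi => if_pos (Finset.mem_range.1 hi)
    rw [Finset.sum_congr rfl hlt, Finset.sum_add_distrib,
      Finset.sum_const, Finset.card_range, smul_eq_mul, Finset.sum_range_add (fun i => s - i),
      Finset.sum_eq_zero (s := range t) fun i _ => by omega, add_zero]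
  have hright : ∑ i ∈ range s, leftDegree q s (q + i) = ∑ i ∈ range s, (s - i) :=
    Finset.sum_congr rfl fun i _ => by unfold leftDegree; split_ifs <;> omega
  rw [Finset.sum_range_add, hleft, hright]
  linarith [two_mul_sum_range_sub s]

lemma sq_add_mul_succ_le {q s : ℕ} (hs : 2 ≤ s) (hsq : s + 2 ≤ q) :
    q * q + s * (s + 1) ≤
      min ((q + s) * (q - 1) + (s + 2).choose 2) (2 * s + (2 * q).choose 2) := by
  obtain ⟨t, rfl⟩ : ∃ t, q = t + 1 := ⟨q - 1, by omega⟩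
  have hs2 : (s + 2).choose 2 * 2 = (s + 2) * (s + 1) := by
    simpa using (Nat.add_one_mul_choose_eq (s + 1) 1).symm
  have hq2 : (2 * t + 2).choose 2 * 2 = (2 * t + 2) * (2 * t + 1) := by
    simpa using (Nat.add_one_mul_choose_eq (2 * t + 1) 1).symm
  rw [show 2 * (t + 1) = 2 * t + 2 by ring, Nat.add_sub_cancel]
  refine le_min ?_ ?_ <;> nlinarith

theorem stmt_12 (q r : ℕ) (hqr : q + 2 ≤ r) (hr2q : r ≤ 2 * q - 2) :
    ∃ (n : ℕ) (G : SimpleGraph (Fin n)), G.Connected ∧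
      indMatchNum G = 1 ∧ minMatchNum G = q ∧ matchNum G = r ∧
      G.edgeSet.ncard ≤
        min (r * (q - 1) + Nat.choose (r - q + 2) 2)
          (2 * (r - q) + Nat.choose (2 * q) 2) := by
  obtain ⟨s, rfl⟩ : ∃ s, r = q + s := ⟨r - q, by omega⟩
  have hstair : ∀ i < q + s, q + s - i ≤ leftDegree q s i := fun i _ => by
    unfold leftDegree; split_ifs <;> omega
  refine ⟨2 * (q + s), chainGraph (q + s) (leftDegree q s),
    chainGraph_connected (by omega) hstair,
    indMatchNum_chainGraph (by omega) (by unfold leftDegree; split_ifs <;> omega),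
    minMatchNum_chainGraph (by omega) (fun i hi => by unfold leftDegree; rw [if_pos hi]; omega)
      (fun i hi _ => by unfold leftDegree; rw [if_neg (by omega)]; omega),
    matchNum_chainGraph hstair, ?_⟩
  rw [Nat.add_sub_cancel_left]
  calc (chainGraph (q + s) (leftDegree q s)).edgeSet.ncard
      ≤ ∑ i ∈ range (q + s), leftDegree q s i := ncard_edgeSet_chainGraph_le
    _ = q * q + s * (s + 1) := sum_range_leftDegree (by omega)
    _ ≤ _ := sq_add_mul_succ_le (by omega) (by omega)
end
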